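/- arXiv:2004.00751 — 2 statements merged into one kernel-verified Lean document; each statement's English description precedes it below -/
import Mathlib

section
/- Let D be a maximal Arrow's single-peaked domain on a set A of size m with terminal elements a₁ and a₂. For i ∈ {1,2}, let Dᵢ be the set of orders in D whose last element is aᵢ. Then the domain contraction of Dᵢ on A∖{aᵢ} is a maximal Arrow's single-peaked domain on A∖{aᵢ}. Furthermore, letting D̂₁ be the set of orders in D with a₁ in position m and a₂ in position m−1, and D̂₂ the set of orders in D with a₂ in position m and a₁ in position m−1, the permutation of A that swaps a₁ and a₂ and fixes every other element maps D̂₁ onto D̂₂. -/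
/-!
If `a` is a terminal element of a maximal Arrow's single-peaked domain `D`, any linear order `w`
ending in `a` that forms no Condorcet triple with `D` on triples avoiding `a` already lies in `D`:
a cycle on a triple `{x, y, a}` with `x ≻ y ≻ a` in `w` needs orders of `D` ranking `x` and `y`
last, and an order of `D` ending in `a` ranks `a` last, so the triple has no never-bottom element.
Hence moving `a` to the bottom of any order of `D` stays in `D`, so the orders ending in `a` have
the same contraction on `A ∖ {a}` as `D` itself; this contraction inherits the Arrow property, and
it is maximal because every order `u` of a larger Condorcet domain lifts to `u ++ [a] ∈ D`.
Likewise, exchanging the last two elements of an order of `D` so that a terminal element comes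
last stays in `D`, which gives the statement about the transposition.
-/

/-- A list `l` represents a linear order on the finite set `A`:
it is duplicate-free and its members are exactly the elements of `A`,
listed from most to least preferred. -/
def IsLinOrd {α : Type*} (A : Finset α) (l : List α) : Prop :=
  l.Nodup ∧ ∀ a : α, a ∈ l ↔ a ∈ A

/-- The restriction of the order `l` to the subset `S`. -/
def restrictList {α : Type*} [DecidableEq α] (l : List α) (S : Finset α) : List α :=
  l.filter (fun a => a ∈ S)

/-- The domain contraction of `D` on `S`: the set of restrictions to `S`
of the orders in `D` (as a set, so duplicates are automatically removed). -/
def contraction {α : Type*} [DecidableEq α] (D : Set (List α)) (S : Finset α) :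
    Set (List α) :=
  (fun l => restrictList l S) '' D

/-- `D` contains a Condorcet triple: elements `a, b, c` and orders
`v₁, v₂, v₃ ∈ D` restricting on `{a,b,c}` to `a≻b≻c`, `b≻c≻a`, `c≻a≻b`. -/
def CondorcetTriple {α : Type*} [DecidableEq α] (D : Set (List α)) : Prop :=
  ∃ a b c : α, a ≠ b ∧ a ≠ c ∧ b ≠ c ∧
    ∃ v₁ ∈ D, ∃ v₂ ∈ D, ∃ v₃ ∈ D,
      restrictList v₁ {a, b, c} = [a, b, c] ∧
      restrictList v₂ {a, b, c} = [b, c, a] ∧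
      restrictList v₃ {a, b, c} = [c, a, b]

/-- A Condorcet domain on `A`: a set of linear orders on `A` with no Condorcet triple. -/
def IsCondorcetDomain {α : Type*} [DecidableEq α] (A : Finset α) (D : Set (List α)) : Prop :=
  (∀ l ∈ D, IsLinOrd A l) ∧ ¬ CondorcetTriple D

/-- A maximal Condorcet domain on `A`: no strict superset is a Condorcet domain on `A`. -/
def IsMaxCondorcetDomain {α : Type*} [DecidableEq α] (A : Finset α) (D : Set (List α)) : Prop :=
  IsCondorcetDomain A D ∧ ∀ D' : Set (List α), IsCondorcetDomain A D' → D ⊆ D' → D' = D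

/-- `x` is a never-bottom element of the triple `T` for `D`:
no order of `D` ranks `x` below both other elements of `T`. -/
def NeverBottom {α : Type*} [DecidableEq α] (D : Set (List α)) (T : Finset α) (x : α) : Prop :=
  x ∈ T ∧ ∀ l ∈ D, (restrictList l T).getLast? ≠ some x

/-- An Arrow's single-peaked domain on `A`: a Condorcet domain such that every
3-element subset of `A` has a never-bottom element. -/
def IsArrowSP {α : Type*} [DecidableEq α] (A : Finset α) (D : Set (List α)) : Prop :=
  IsCondorcetDomain A D ∧
    ∀ T : Finset α, T ⊆ A → T.card = 3 → ∃ x : α, NeverBottom D T x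

/-- A maximal Arrow's single-peaked domain on `A`. -/
def IsMaxArrowSP {α : Type*} [DecidableEq α] (A : Finset α) (D : Set (List α)) : Prop :=
  IsMaxCondorcetDomain A D ∧ IsArrowSP A D

/-- `a` is a terminal element of `D`: some order of `D` ends with (least element) `a`. -/
def TerminalElt {α : Type*} (D : Set (List α)) (a : α) : Prop :=
  ∃ l ∈ D, l.getLast? = some a

/-- `l` is an extremal order of `D`: `l ∈ D`, and the first and last elements of `l`
are the two terminal elements of `D`. -/
def IsExtremal {α : Type*} (D : Set (List α)) (l : List α) : Prop :=
  l ∈ D ∧ ∃ s t : α, s ≠ t ∧ l.head? = some s ∧ l.getLast? = some t ∧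
    TerminalElt D s ∧ TerminalElt D t ∧ ∀ a : α, TerminalElt D a → a = s ∨ a = t

/-- The position of `a` in the order `l`, the first element being in position 1. -/
def posIn {α : Type*} [DecidableEq α] (l : List α) (a : α) : ℕ :=
  l.idxOf a + 1

section
variable {α : Type*}

lemma TerminalElt.mem {A : Finset α} {D : Set (List α)} (hD : ∀ l ∈ D, IsLinOrd A l) {a : α}
    (ha : TerminalElt D a) : a ∈ A := by
  obtain ⟨l, hl, hlast⟩ := ha
  exact ((hD l hl).2 a).mp (List.mem_of_getLast? hlast)

variable [DecidableEq α]

lemma mem_restrictList {l : List α} {S : Finset α} {x : α} :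
    x ∈ restrictList l S ↔ x ∈ l ∧ x ∈ S := by
  simp [restrictList]

lemma restrictList_restrictList (l : List α) {S T : Finset α} (h : T ⊆ S) :
    restrictList (restrictList l S) T = restrictList l T := by
  simp only [restrictList, List.filter_filter]
  refine List.filter_congr fun x _ => ?_
  by_cases hx : x ∈ T
  · simp [hx, h hx]
  · simp [hx]

lemma restrictList_append_singleton_of_mem (l : List α) {T : Finset α} {a : α} (ha : a ∈ T) :
    restrictList (l ++ [a]) T = restrictList l T ++ [a] := by
  simp [restrictList, ha]

lemma restrictList_append_singleton_of_notMem (l : List α) {T : Finset α} {a : α}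
    (ha : a ∉ T) : restrictList (l ++ [a]) T = restrictList l T := by
  simp [restrictList, ha]

lemma getLast?_restrictList {l : List α} {T : Finset α} {a : α}
    (h : l.getLast? = some a) (ha : a ∈ T) : (restrictList l T).getLast? = some a := by
  obtain ⟨l', rfl⟩ := List.getLast?_eq_some_iff.mp h
  rw [restrictList_append_singleton_of_mem _ ha, List.getLast?_concat]

namespace IsLinOrd

variable {S : Finset α} {l : List α}

lemma length_eq (hl : IsLinOrd S l) : l.length = S.card := by
  rw [← List.toFinset_card_of_nodup hl.1]
  exact congrArg Finset.card (Finset.ext fun x => by simp [hl.2 x])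

lemma restrictList_eq_self (hl : IsLinOrd S l) : restrictList l S = l :=
  List.filter_eq_self.mpr fun x hx => by simpa using (hl.2 x).mp hx

lemma restrictList_of_subset (hl : IsLinOrd S l) {T : Finset α} (hT : T ⊆ S) :
    IsLinOrd T (restrictList l T) :=
  ⟨hl.1.filter _, fun x => mem_restrictList.trans ⟨And.right, fun h => ⟨(hl.2 x).mpr (hT h), h⟩⟩⟩

lemma subset_of_restrictList_eq (hl : IsLinOrd S l) {T : Finset α} {r : List α}
    (h : restrictList l T = r) (hT : ∀ t ∈ T, t ∈ r) : T ⊆ S :=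
  fun t ht => (hl.2 t).mp (mem_restrictList.mp (h ▸ hT t ht)).1

lemma append_singleton {a : α} (hl : IsLinOrd (S.erase a) l) (ha : a ∈ S) :
    IsLinOrd S (l ++ [a]) := by
  refine ⟨hl.1.append (List.nodup_singleton a) ?_, fun x => ?_⟩
  · simp only [List.disjoint_singleton, hl.2 a, Finset.notMem_erase, not_false_eq_true]
  · by_cases hxa : x = a
    · simp [hxa, ha]
    · simp [hl.2 x, hxa]

end IsLinOrd

lemma posIn_eq_length_and_eq_length_sub_one_iff {l : List α} (hl : l.Nodup) {b c : α} :
    posIn l b = l.length ∧ posIn l c = l.length - 1 ↔ ∃ l₀, l = l₀ ++ [c, b] := by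
  constructor
  · rintro ⟨hb, hc⟩
    simp only [posIn] at hb hc
    have hb' := List.getElem_idxOf (x := b) (xs := l) (by omega)
    have hc' := List.getElem_idxOf (x := c) (xs := l) (by omega)
    simp only [show l.idxOf b = l.length - 2 + 1 by omega, show l.idxOf c = l.length - 2 by omega]
      at hb' hc'
    refine ⟨l.take (l.length - 2), ?_⟩
    conv_lhs => rw [← List.take_append_drop (l.length - 2) l]
    rw [List.drop_eq_getElem_cons (by omega), List.drop_eq_getElem_cons (by omega),
      List.drop_eq_nil_of_le (by omega), hb', hc']
  · rintro ⟨l₀, rfl⟩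
    obtain ⟨-, hpair, hdisj⟩ := List.nodup_append.mp hl
    have hcb : c ≠ b := by simpa using hpair
    simp only [posIn, List.idxOf_append_of_notMem (fun h => hdisj b h b (by simp) rfl),
      List.idxOf_append_of_notMem (fun h => hdisj c h c (by simp) rfl), List.idxOf_cons_ne _ hcb,
      List.idxOf_cons_self, List.length_append]
    simp

lemma map_swap_append_pair {l₀ : List α} {b c : α} (hb : b ∉ l₀) (hc : c ∉ l₀) :
    (l₀ ++ [b, c]).map (Equiv.swap b c) = l₀ ++ [c, b] := by
  rw [List.map_append, List.map_congr_left fun t ht => Equiv.swap_apply_of_ne_of_ne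
    (ne_of_mem_of_not_mem ht hb) (ne_of_mem_of_not_mem ht hc)]
  simp

variable {A : Finset α} {D : Set (List α)}

/-- `w` occurs at most once in a Condorcet triple of `insert w D` (the three restrictions have
distinct heads), and rotating the cycle puts it in the role of `v₁`. -/
theorem IsMaxCondorcetDomain.mem_of_not_condorcet (hD : IsMaxCondorcetDomain A D)
    {w : List α} (hw : IsLinOrd A w)
    (h : ∀ a b c : α, a ≠ b → a ≠ c → b ≠ c → ∀ v₂ ∈ D, ∀ v₃ ∈ D,
      restrictList w {a, b, c} = [a, b, c] → restrictList v₂ {a, b, c} = [b, c, a] →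
      restrictList v₃ {a, b, c} = [c, a, b] → False) : w ∈ D := by
  suffices hCD : IsCondorcetDomain A (insert w D) by
    rw [← hD.2 _ hCD (Set.subset_insert w D)]
    exact Set.mem_insert w D
  have rot : ∀ a b c : α, ({b, c, a} : Finset α) = {a, b, c} := fun a b c => by
    ext; simp only [Finset.mem_insert, Finset.mem_singleton]; tauto
  have hw_first : ∀ a b c : α, a ≠ b → a ≠ c → b ≠ c → ∀ v₂ ∈ insert w D, ∀ v₃ ∈ insert w D,
      restrictList w {a, b, c} = [a, b, c] → restrictList v₂ {a, b, c} = [b, c, a] →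
      restrictList v₃ {a, b, c} = [c, a, b] → False := by
    intro a b c hab hac hbc v₂ hv₂ v₃ hv₃ h₁ h₂ h₃
    rcases hv₂ with rfl | hv₂
    · exact hab (by simpa using congrArg List.head? (h₁.symm.trans h₂))
    rcases hv₃ with rfl | hv₃
    · exact hac (by simpa using congrArg List.head? (h₁.symm.trans h₃))
    exact h a b c hab hac hbc v₂ hv₂ v₃ hv₃ h₁ h₂ h₃
  refine ⟨fun l hl => hl.elim (· ▸ hw) (hD.1.1 l), ?_⟩
  rintro ⟨a, b, c, hab, hac, hbc, v₁, hv₁, v₂, hv₂, v₃, hv₃, h₁, h₂, h₃⟩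
  rcases hv₁ with rfl | hv₁
  · exact hw_first a b c hab hac hbc v₂ hv₂ v₃ hv₃ h₁ h₂ h₃
  rcases hv₂ with rfl | hv₂
  · exact hw_first b c a hbc hab.symm hac.symm v₃ hv₃ v₁ (Or.inr hv₁)
      (by rw [rot]; exact h₂) (by rw [rot]; exact h₃) (by rw [rot]; exact h₁)
  rcases hv₃ with rfl | hv₃
  · exact hw_first c a b hac.symm hbc.symm hab v₁ (Or.inr hv₁) v₂ (Or.inr hv₂)
      (by rw [rot, rot]; exact h₃) (by rw [rot, rot]; exact h₁) (by rw [rot, rot]; exact h₂)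
  exact hD.1.2 ⟨a, b, c, hab, hac, hbc, v₁, hv₁, v₂, hv₂, v₃, hv₃, h₁, h₂, h₃⟩

theorem IsCondorcetDomain.contraction (hD : IsCondorcetDomain A D)
    {S : Finset α} (hS : S ⊆ A) : IsCondorcetDomain S (contraction D S) := by
  refine ⟨?_, ?_⟩
  · rintro _ ⟨v, hv, rfl⟩
    exact (hD.1 v hv).restrictList_of_subset hS
  · rintro ⟨x, y, z, hxy, hxz, hyz, _, ⟨v₁, hv₁, rfl⟩, _, ⟨v₂, hv₂, rfl⟩, _, ⟨v₃, hv₃, rfl⟩,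
      h₁, h₂, h₃⟩
    have hT := ((hD.1 v₁ hv₁).restrictList_of_subset hS).subset_of_restrictList_eq h₁ (by simp)
    rw [restrictList_restrictList _ hT] at h₁ h₂ h₃
    exact hD.2 ⟨x, y, z, hxy, hxz, hyz, v₁, hv₁, v₂, hv₂, v₃, hv₃, h₁, h₂, h₃⟩

theorem IsArrowSP.contraction (hD : IsArrowSP A D) {S : Finset α} (hS : S ⊆ A) :
    IsArrowSP S (contraction D S) := by
  refine ⟨hD.1.contraction hS, fun T hT hT3 => ?_⟩
  obtain ⟨x, hxT, hx⟩ := hD.2 T (hT.trans hS) hT3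
  refine ⟨x, hxT, ?_⟩
  rintro _ ⟨v, hv, rfl⟩
  rw [restrictList_restrictList _ hT]
  exact hx v hv

namespace IsMaxArrowSP

variable {a : α}

theorem mem_of_getLast?_eq (hD : IsMaxArrowSP A D) (ha : TerminalElt D a) {w : List α}
    (hw : IsLinOrd A w) (hlast : w.getLast? = some a)
    (h : ∀ x y z : α, x ≠ y → x ≠ z → y ≠ z → a ∉ ({x, y, z} : Finset α) →
      ∀ v₂ ∈ D, ∀ v₃ ∈ D,
      restrictList w {x, y, z} = [x, y, z] → restrictList v₂ {x, y, z} = [y, z, x] →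
      restrictList v₃ {x, y, z} = [z, x, y] → False) : w ∈ D := by
  refine hD.1.mem_of_not_condorcet hw fun x y z hxy hxz hyz v₂ hv₂ v₃ hv₃ h₁ h₂ h₃ => ?_
  by_cases haT : a ∈ ({x, y, z} : Finset α)
  · have hza : z = a := by simpa [h₁] using getLast?_restrictList hlast haT
    subst hza
    have hTA := (hD.2.1.1 v₂ hv₂).subset_of_restrictList_eq h₂ (by simp)
    obtain ⟨t, htT, ht⟩ := hD.2.2 _ hTA (Finset.card_eq_three.mpr ⟨x, y, z, hxy, hxz, hyz, rfl⟩)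
    obtain ⟨l, hl, hlast'⟩ := ha
    simp only [Finset.mem_insert, Finset.mem_singleton] at htT
    rcases htT with rfl | rfl | rfl
    · exact ht v₂ hv₂ (by simp [h₂])
    · exact ht v₃ hv₃ (by simp [h₃])
    · exact ht l hl (getLast?_restrictList hlast' haT)
  · exact h x y z hxy hxz hyz haT v₂ hv₂ v₃ hv₃ h₁ h₂ h₃

theorem mem_of_restrictList_eq (hD : IsMaxArrowSP A D) (ha : TerminalElt D a) {w : List α}
    (hw : IsLinOrd A w) (hlast : w.getLast? = some a)
    (h : ∀ T ⊆ A, a ∉ T → ∃ v ∈ D, restrictList v T = restrictList w T) : w ∈ D := by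
  refine hD.mem_of_getLast?_eq ha hw hlast fun x y z hxy hxz hyz haT v₂ hv₂ v₃ hv₃ h₁ h₂ h₃ => ?_
  obtain ⟨v, hv, hvw⟩ := h _ ((hD.2.1.1 v₂ hv₂).subset_of_restrictList_eq h₂ (by simp)) haT
  exact hD.2.1.2 ⟨x, y, z, hxy, hxz, hyz, v, hv, v₂, hv₂, v₃, hv₃, hvw.trans h₁, h₂, h₃⟩

theorem restrictList_erase_append_mem (hD : IsMaxArrowSP A D) (ha : TerminalElt D a)
    {v : List α} (hv : v ∈ D) :
    restrictList v (A.erase a) ++ [a] ∈ D := by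
  have hw := ((hD.2.1.1 v hv).restrictList_of_subset (A.erase_subset a)).append_singleton
    (ha.mem hD.2.1.1)
  refine hD.mem_of_restrictList_eq ha hw List.getLast?_concat fun T hTA haT => ⟨v, hv, ?_⟩
  rw [restrictList_append_singleton_of_notMem _ haT,
    restrictList_restrictList _ (Finset.subset_erase.mpr ⟨hTA, haT⟩)]

theorem contraction_getLast?_eq (hD : IsMaxArrowSP A D) (ha : TerminalElt D a) :
    contraction {l ∈ D | l.getLast? = some a} (A.erase a) = contraction D (A.erase a) := by
  refine (Set.image_mono (Set.sep_subset _ _)).antisymm ?_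
  rintro _ ⟨v, hv, rfl⟩
  refine ⟨_, ⟨hD.restrictList_erase_append_mem ha hv, List.getLast?_concat⟩, ?_⟩
  dsimp only
  rw [restrictList_append_singleton_of_notMem _ (A.notMem_erase a),
    restrictList_restrictList _ subset_rfl]

theorem isMaxCondorcetDomain_contraction_erase (hD : IsMaxArrowSP A D) (ha : TerminalElt D a) :
    IsMaxCondorcetDomain (A.erase a) (contraction D (A.erase a)) := by
  refine ⟨hD.2.1.contraction (A.erase_subset a),
    fun D' hD' hsub => Set.Subset.antisymm (fun u hu => ?_) hsub⟩
  have hu := hD'.1 u hu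
  have huD : u ++ [a] ∈ D := by
    refine hD.mem_of_getLast?_eq ha (hu.append_singleton (ha.mem hD.2.1.1)) List.getLast?_concat
      fun x y z hxy hxz hyz haT v₂ hv₂ v₃ hv₃ h₁ h₂ h₃ => ?_
    rw [restrictList_append_singleton_of_notMem _ haT] at h₁
    have hT := hu.subset_of_restrictList_eq h₁ (by simp)
    refine hD'.2 ⟨x, y, z, hxy, hxz, hyz, u, ‹_›, _, hsub ⟨v₂, hv₂, rfl⟩, _, hsub ⟨v₃, hv₃, rfl⟩,
      h₁, ?_, ?_⟩ <;> rwa [restrictList_restrictList _ hT]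
  refine ⟨u ++ [a], huD, ?_⟩
  dsimp only
  rw [restrictList_append_singleton_of_notMem _ (A.notMem_erase a), hu.restrictList_eq_self]

theorem isMaxArrowSP_contraction_getLast?_eq (hD : IsMaxArrowSP A D) (ha : TerminalElt D a) :
    IsMaxArrowSP (A.erase a) (contraction {l ∈ D | l.getLast? = some a} (A.erase a)) := by
  rw [hD.contraction_getLast?_eq ha]
  exact ⟨hD.isMaxCondorcetDomain_contraction_erase ha,
    hD.2.contraction (A.erase_subset a)⟩

theorem append_pair_swap_mem (hD : IsMaxArrowSP A D) {b c : α} (hb : TerminalElt D b)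
    {l₀ : List α} (hl : l₀ ++ [b, c] ∈ D) : l₀ ++ [c, b] ∈ D := by
  have hperm : (l₀ ++ [c, b]).Perm (l₀ ++ [b, c]) := .append_left l₀ (.swap b c [])
  have hlin := hD.2.1.1 _ hl
  refine hD.mem_of_restrictList_eq hb ⟨hperm.nodup_iff.mpr hlin.1,
    fun t => hperm.mem_iff.trans (hlin.2 t)⟩ (by simp) fun T _ hbT => ⟨_, hl, ?_⟩
  simp [restrictList, List.filter_cons, hbT]

theorem image_map_swap_subset (hD : IsMaxArrowSP A D) {b c : α} (hb : TerminalElt D b) :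
    (fun l : List α => l.map (Equiv.swap b c)) '' {l ∈ D | ∃ l₀, l = l₀ ++ [b, c]} ⊆
      {l ∈ D | ∃ l₀, l = l₀ ++ [c, b]} := by
  rintro _ ⟨_, ⟨hl, l₀, rfl⟩, rfl⟩
  have hnd := (List.nodup_append.mp (hD.2.1.1 _ hl).1).2.2
  dsimp only
  rw [map_swap_append_pair (fun h => hnd b h b (by simp) rfl) (fun h => hnd c h c (by simp) rfl)]
  exact ⟨hD.append_pair_swap_mem hb hl, l₀, rfl⟩

end IsMaxArrowSP

end

theorem stmt_4_general {α : Type*} [DecidableEq α] (A : Finset α) (m : ℕ) (hm : A.card = m)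
    (D : Set (List α)) (hD : IsMaxArrowSP A D) (a₁ a₂ : α)
    (ht1 : TerminalElt D a₁) (ht2 : TerminalElt D a₂) :
    (∀ i ∈ ({a₁, a₂} : Set α),
      IsMaxArrowSP (A.erase i)
        (contraction {l ∈ D | l.getLast? = some i} (A.erase i))) ∧
    (fun l : List α => l.map (Equiv.swap a₁ a₂)) ''
        {l ∈ D | posIn l a₁ = m ∧ posIn l a₂ = m - 1} =
      {l ∈ D | posIn l a₂ = m ∧ posIn l a₁ = m - 1} := by
  have hpos : ∀ b c : α, {l ∈ D | posIn l b = m ∧ posIn l c = m - 1} =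
      {l ∈ D | ∃ l₀, l = l₀ ++ [c, b]} := fun b c => Set.sep_ext_iff.mpr fun l hl => by
    have hlin := hD.2.1.1 l hl
    rw [← hm, ← hlin.length_eq]
    exact posIn_eq_length_and_eq_length_sub_one_iff hlin.1
  refine ⟨?_, ?_⟩
  · rintro i (rfl | rfl)
    exacts [hD.isMaxArrowSP_contraction_getLast?_eq ht1,
      hD.isMaxArrowSP_contraction_getLast?_eq ht2]
  · have hswap : Function.Involutive (List.map (Equiv.swap a₁ a₂)) :=
      Function.Involutive.list_map (Equiv.swap_apply_self a₁ a₂)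
    rw [hpos, hpos]
    refine (Equiv.swap_comm a₁ a₂ ▸ hD.image_map_swap_subset ht2).antisymm fun l hl =>
      ⟨l.map (Equiv.swap a₁ a₂), hD.image_map_swap_subset ht1 ⟨l, hl, rfl⟩, hswap l⟩

/-- Contraction lemma: for a maximal Arrow's single-peaked domain `D` with terminal
elements `a₁, a₂`, the contraction on `A ∖ {aᵢ}` of the orders ending in `aᵢ` is a
maximal Arrow's single-peaked domain; and the transposition `(a₁ a₂)` maps the orders
ending `…, a₂, a₁` onto the orders ending `…, a₁, a₂`. -/
theorem stmt_4 {α : Type*} [DecidableEq α] (A : Finset α) (m : ℕ) (hm : A.card = m)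
    (D : Set (List α)) (hD : IsMaxArrowSP A D) (a₁ a₂ : α) (h12 : a₁ ≠ a₂)
    (ht1 : TerminalElt D a₁) (ht2 : TerminalElt D a₂)
    (hall : ∀ a : α, TerminalElt D a → a = a₁ ∨ a = a₂) :
    (∀ i ∈ ({a₁, a₂} : Set α),
      IsMaxArrowSP (A.erase i)
        (contraction {l ∈ D | l.getLast? = some i} (A.erase i))) ∧
    (fun l : List α => l.map (Equiv.swap a₁ a₂)) ''
        {l ∈ D | posIn l a₁ = m ∧ posIn l a₂ = m - 1} =
      {l ∈ D | posIn l a₂ = m ∧ posIn l a₁ = m - 1} :=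
  stmt_4_general A m hm D hD a₁ a₂ ht1 ht2
end

section
/- Let D be a maximal Arrow's single-peaked domain on a set A of size m, let f be a terminal element of D, and let W ∈ D be an order with f in position i. For any k with i ≤ k ≤ m, the order W_k obtained from W by moving f to position k (leaving the relative order of all other elements unchanged) belongs to D. -/
namespace List

variable {α : Type*}

theorem insertIdx_eq_take_append_cons_drop (x : α) :
    ∀ {n : ℕ} {l : List α}, n ≤ l.length → l.insertIdx n x = l.take n ++ x :: l.drop n
  | 0, _, _ => rfl
  | _ + 1, [], h => by simp at h
  | n + 1, a :: l, h => by
    simp [insertIdx_succ_cons,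
      insertIdx_eq_take_append_cons_drop x (n := n) (l := l) (by simpa using h)]

theorem filter_insertIdx_of_neg {p : α → Bool} {x : α} {n : ℕ} {l : List α}
    (hn : n ≤ l.length) (hx : p x = false) :
    (l.insertIdx n x).filter p = l.filter p := by
  rw [insertIdx_eq_take_append_cons_drop x hn, filter_append, filter_cons_of_neg (by simp [hx]),
    ← filter_append, take_append_drop]

theorem getLast?_filter_insertIdx_of_le {p : α → Bool} {f : α} {j n : ℕ} {L : List α}
    (hf : p f = true) (hjn : j ≤ n) (hn : n ≤ L.length) :
    ((L.insertIdx n f).filter p).getLast? = some f ∨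
      ((L.insertIdx n f).filter p).getLast? = ((L.insertIdx j f).filter p).getLast? := by
  have hdrop : L.drop j = (L.drop j).take (n - j) ++ L.drop n := by
    conv_lhs => rw [← take_append_drop (n - j) (L.drop j)]
    rw [drop_drop, Nat.add_sub_cancel' hjn]
  rw [insertIdx_eq_take_append_cons_drop f hn,
    insertIdx_eq_take_append_cons_drop f (hjn.trans hn), hdrop]
  simp only [filter_append, filter_cons_of_pos hf]
  generalize (L.drop n).filter p = R
  rcases eq_or_ne R [] with rfl | hR
  · simp
  · right
    rw [getLast?_append_cons, getLast?_append_cons, ← cons_append, ← singleton_append,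
      getLast?_append_of_ne_nil _ hR, getLast?_append_of_ne_nil _ hR]

theorem filter_erase_of_neg [DecidableEq α] {p : α → Bool} {x : α} {l : List α}
    (hx : p x = false) : (l.erase x).filter p = l.filter p := by
  rw [← erase_filter, erase_of_not_mem]
  simp [hx]

theorem insertIdx_idxOf_erase [DecidableEq α] {x : α} {l : List α} (hx : x ∈ l) :
    (l.erase x).insertIdx (l.idxOf x) x = l := by
  have h := idxOf_lt_length_iff.2 hx
  have := insertIdx_eraseIdx_getElem h
  rwa [getElem_idxOf, eraseIdx_idxOf_eq_erase] at this

end List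

theorem IsLinOrd.of_perm {α : Type*} {A : Finset α} {l l' : List α} (hl : IsLinOrd A l)
    (h : l'.Perm l) : IsLinOrd A l' :=
  ⟨h.nodup_iff.2 hl.1, fun a => h.mem_iff.trans (hl.2 a)⟩

section Domain

variable {α : Type*} [DecidableEq α] {A : Finset α} {D : Set (List α)}

theorem IsLinOrd.length_eq_card {l : List α} (hl : IsLinOrd A l) : l.length = A.card := by
  rw [← List.toFinset_card_of_nodup hl.1]
  congr
  ext a
  simp [hl.2 a]

theorem not_condorcetTriple_of_forall_neverBottom (hlin : ∀ l ∈ D, IsLinOrd A l)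
    (hNB : ∀ T ⊆ A, T.card = 3 → ∃ x, NeverBottom D T x) : ¬ CondorcetTriple D := by
  rintro ⟨a, b, c, hab, hac, hbc, v₁, hv₁, v₂, hv₂, v₃, hv₃, r₁, r₂, r₃⟩
  have hTA : {a, b, c} ⊆ A := by
    intro y hy
    have : y ∈ restrictList v₁ {a, b, c} := by rw [r₁]; simpa using hy
    exact ((hlin v₁ hv₁).2 y).1 (List.mem_of_mem_filter this)
  obtain ⟨x, hxT, hx⟩ := hNB _ hTA (Finset.card_eq_three.2 ⟨a, b, c, hab, hac, hbc, rfl⟩)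
  simp only [Finset.mem_insert, Finset.mem_singleton] at hxT
  rcases hxT with rfl | rfl | rfl
  · exact hx v₂ hv₂ (by rw [r₂]; rfl)
  · exact hx v₃ hv₃ (by rw [r₃]; rfl)
  · exact hx v₁ hv₁ (by rw [r₁]; rfl)

theorem IsArrowSP.insert_of_neverBottom {l : List α} (hD : IsArrowSP A D) (hl : IsLinOrd A l)
    (hbot : ∀ T x, NeverBottom D T x → (restrictList l T).getLast? ≠ some x) :
    IsArrowSP A (insert l D) := by
  have hlin : ∀ l' ∈ insert l D, IsLinOrd A l' := by
    rintro l' (rfl | hl')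
    exacts [hl, hD.1.1 l' hl']
  have hNB : ∀ T ⊆ A, T.card = 3 → ∃ x, NeverBottom (insert l D) T x := by
    intro T hTA hT
    obtain ⟨x, hxT, hx⟩ := hD.2 T hTA hT
    refine ⟨x, hxT, ?_⟩
    rintro l' (rfl | hl')
    exacts [hbot T x ⟨hxT, hx⟩, hx l' hl']
  exact ⟨⟨hlin, not_condorcetTriple_of_forall_neverBottom hlin hNB⟩, hNB⟩

theorem IsMaxCondorcetDomain.mem_of_insert {l : List α} (hD : IsMaxCondorcetDomain A D)
    (h : IsCondorcetDomain A (insert l D)) : l ∈ D :=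
  hD.2 _ h (Set.subset_insert l D) ▸ Set.mem_insert l D

theorem TerminalElt.not_neverBottom {f : α} {T : Finset α} (hf : TerminalElt D f)
    (hfT : f ∈ T) : ¬ NeverBottom D T f := by
  obtain ⟨V, hV, hVf⟩ := hf
  obtain ⟨ys, rfl⟩ := List.getLast?_eq_some_iff.1 hVf
  rintro ⟨-, h⟩
  exact h _ hV (by simp [restrictList, hfT])

theorem NeverBottom.getLast?_restrictList_insertIdx_erase_ne {T : Finset α} {x f : α}
    {W : List α} {n : ℕ} (hx : NeverBottom D T x) (hf : TerminalElt D f) (hW : W ∈ D)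
    (hfW : f ∈ W) (hn₁ : W.idxOf f ≤ n) (hn₂ : n ≤ (W.erase f).length) :
    (restrictList ((W.erase f).insertIdx n f) T).getLast? ≠ some x := by
  by_cases hfT : f ∈ T
  · have hxf : x ≠ f := by
      rintro rfl
      exact hf.not_neverBottom hfT hx
    rcases List.getLast?_filter_insertIdx_of_le (p := fun a => decide (a ∈ T))
      (by simpa using hfT) hn₁ hn₂ with h | h
    · rw [restrictList, h]
      simpa using hxf.symm
    · rw [restrictList, h, List.insertIdx_idxOf_erase hfW]
      exact hx.2 W hW
  · rw [restrictList, List.filter_insertIdx_of_neg hn₂ (by simpa using hfT),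
      List.filter_erase_of_neg (by simpa using hfT)]
    exact hx.2 W hW

end Domain

/-- Shuffle lemma: if `f` is a terminal element of a maximal Arrow's single-peaked
domain `D` and `W ∈ D` has `f` in position `i`, then for any `i ≤ k ≤ m` the order
obtained from `W` by moving `f` to position `k` is also in `D`. -/
theorem stmt_8 {α : Type*} [DecidableEq α] (A : Finset α) (m : ℕ) (hm : A.card = m)
    (D : Set (List α)) (hD : IsMaxArrowSP A D) (f : α) (hf : TerminalElt D f)
    (W : List α) (hW : W ∈ D) (i k : ℕ) (hi : posIn W f = i) (hik : i ≤ k)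
    (hkm : k ≤ m) :
    (W.erase f).insertIdx (k - 1) f ∈ D := by
  obtain ⟨hmax, hArrow⟩ := hD
  have hWlin := hArrow.1.1 W hW
  have hfW : f ∈ W := by
    obtain ⟨V, hV, hVf⟩ := hf
    exact (hWlin.2 f).2 (((hArrow.1.1 V hV).2 f).1 (List.mem_of_getLast? hVf))
  have hn₁ : W.idxOf f ≤ k - 1 := by
    rw [posIn] at hi
    omega
  have hn₂ : k - 1 ≤ (W.erase f).length := by
    have hpos := List.length_pos_of_mem hfW
    rw [List.length_erase_of_mem hfW, hWlin.length_eq_card, hm] at *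
    omega
  have hmoved : IsLinOrd A ((W.erase f).insertIdx (k - 1) f) :=
    hWlin.of_perm ((List.perm_insertIdx f _ hn₂).trans (List.perm_cons_erase hfW).symm)
  exact hmax.mem_of_insert (hArrow.insert_of_neverBottom hmoved fun T x hx =>
    hx.getLast?_restrictList_insertIdx_erase_ne hf hW hfW hn₁ hn₂).1
end
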